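/- Let n ≥ 3 and let f be a fixed-point-free involution on ZMod (2n) such that f a = b + 1 and f (a+1) = b, where a, a+1, b, b+1 are four pairwise distinct points. Let f' be the chord diagram on ZMod (2n−4) obtained by deleting the four points a, a+1, b, b+1 (and the two chords {a, b+1}, {a+1, b}) and relabelling the remaining 2n−4 points so as to preserve the cyclic order. Then every remaining chord has the same Gaussian parity in f' as the corresponding chord has in f. (This verifies parity axiom 4 for the Gaussian parity in the case of a second Reidemeister move: crossings not involved in the move keep their parity.) -/

import Mathlib

/-!
Measured from the base point `a + 2`, the relabelling `φ` is an order-preserving bijection from the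
surviving points onto `ZMod (2n - 4)`. Membership of a point in an open arc only depends on the
cyclic order of the three points involved, so linking between surviving chords is unchanged. The
two deleted chords are parallel: a surviving chord is linked with both of them or with neither,
so the number of chords linked with it changes by `2` or `0`.
-/

/-- The open arc from `u` to `v` on the cyclic set `ZMod N`: the points
`u+1, u+2, …, v-1` reached from `u` by repeatedly adding `1` before reaching `v`. -/
def openArc {N : ℕ} (u v : ZMod N) : Set (ZMod N) :=
  {w | 0 < (w - u).val ∧ (w - u).val < (v - u).val}

/-- For a chord diagram given by the fixed-point-free involution `f`, the chord
`{b, f b}` is linked with the chord `{a, f a}` if exactly one of `b`, `f b`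
lies in the open arc from `a` to `f a`. -/
def Linked {N : ℕ} (f : ZMod N → ZMod N) (a b : ZMod N) : Prop :=
  Xor' (b ∈ openArc a (f a)) (f b ∈ openArc a (f a))

/-- The number of chords of the chord diagram `f` linked with the chord `{a, f a}`. -/
noncomputable def linkedCount {N : ℕ} (f : ZMod N → ZMod N) (a : ZMod N) : ℕ :=
  Set.ncard {d : Set (ZMod N) | ∃ b, d = {b, f b} ∧ Linked f a b}

/-- The chord `{a, f a}` is Gaussian-even: the number of chords linked with it is even. -/
def GaussEven {N : ℕ} (f : ZMod N → ZMod N) (a : ZMod N) : Prop :=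
  Even (linkedCount f a)

open Function Set

namespace ZMod

variable {N : ℕ} [NeZero N]

lemma val_add_eq_or (x y : ZMod N) :
    (x + y).val = x.val + y.val ∨ (x + y).val + N = x.val + y.val := by
  rcases lt_or_ge (x.val + y.val) N with h | h
  · exact .inl (val_add_of_lt h)
  · exact .inr (val_add_val_of_le h).symm

lemma val_sub_right_injective (c : ZMod N) : Injective fun d : ZMod N => (d - c).val :=
  (val_injective N).comp (sub_left_injective)

end ZMod

section OpenArc

variable {N : ℕ} [NeZero N]

lemma mem_openArc_iff (c u v w : ZMod N) :
    w ∈ openArc u v ↔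
      (u - c).val < (w - c).val ∧ (w - c).val < (v - c).val ∨
      (w - c).val < (v - c).val ∧ (v - c).val < (u - c).val ∨
      (v - c).val < (u - c).val ∧ (u - c).val < (w - c).val := by
  have hw := ZMod.val_add_eq_or (w - u) (u - c)
  have hv := ZMod.val_add_eq_or (v - u) (u - c)
  rw [sub_add_sub_cancel] at hw hv
  have := ZMod.val_lt (w - c)
  have := ZMod.val_lt (v - c)
  have := ZMod.val_lt (u - c)
  have := ZMod.val_lt (w - u)
  have := ZMod.val_lt (v - u)
  simp only [openArc, mem_ofPred_eq]
  omega

lemma add_one_mem_openArc_iff {u v w : ZMod N} (hwu : w ≠ u) (hw1u : w + 1 ≠ u)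
    (hw1v : w + 1 ≠ v) :
    w + 1 ∈ openArc u v ↔ w ∈ openArc u v := by
  have h := ZMod.val_add_eq_or (w - u) 1
  rw [sub_add_eq_add_sub] at h
  have h1 : (1 : ZMod N).val ≤ 1 := ZMod.val_one_eq_one_mod N ▸ Nat.mod_le 1 N
  have h0 : (w + 1 - u).val ≠ 0 := by rwa [Ne, ZMod.val_eq_zero, sub_eq_zero]
  have h0' : (w - u).val ≠ 0 := by rwa [Ne, ZMod.val_eq_zero, sub_eq_zero]
  have hv : (w + 1 - u).val ≠ (v - u).val :=
    fun heq => hw1v (by simpa using ZMod.val_injective N heq)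
  have := ZMod.val_lt (w - u)
  simp only [openArc, mem_ofPred_eq]
  omega

variable {M : ℕ} [NeZero M]

lemma mem_openArc_iff_of_val_lt_iff {s : Set (ZMod N)} {c : ZMod N} {g : ZMod N → ZMod M}
    (hg : ∀ x ∈ s, ∀ y ∈ s, (g x).val < (g y).val ↔ (x - c).val < (y - c).val)
    {u v w : ZMod N} (hu : u ∈ s) (hv : v ∈ s) (hw : w ∈ s) :
    g w ∈ openArc (g u) (g v) ↔ w ∈ openArc u v := by
  rw [mem_openArc_iff c, mem_openArc_iff 0]
  simp only [sub_zero, hg u hu w hw, hg w hw v hv, hg v hv u hu]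

end OpenArc

lemma linked_apply_iff {N : ℕ} {f : ZMod N → ZMod N} (hf : Involutive f) (x y : ZMod N) :
    Linked f x (f y) ↔ Linked f x y := by
  rw [Linked, Linked, hf y]
  exact Iff.of_eq (xor_comm _ _)

section Linked

variable {N : ℕ} [NeZero N]

lemma linked_add_one_iff_of_parallel {f : ZMod N → ZMod N} {a b x : ZMod N}
    (h1 : f a = b + 1) (h2 : f (a + 1) = b)
    (hx : x ∉ ({a, a + 1, b, b + 1} : Set (ZMod N)))
    (hfx : f x ∉ ({a, a + 1, b, b + 1} : Set (ZMod N))) :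
    Linked f x (a + 1) ↔ Linked f x a := by
  simp only [mem_insert_iff, mem_singleton_iff, not_or] at hx hfx
  rw [Linked, Linked, h1, h2,
    add_one_mem_openArc_iff (Ne.symm hx.1) (Ne.symm hx.2.1) (Ne.symm hfx.2.1),
    add_one_mem_openArc_iff (Ne.symm hx.2.2.1) (Ne.symm hx.2.2.2) (Ne.symm hfx.2.2.2)]

variable {M : ℕ} [NeZero M]

lemma linked_iff_of_val_lt_iff {s : Set (ZMod N)} {c : ZMod N} {g : ZMod N → ZMod M}
    {f : ZMod N → ZMod N} {f' : ZMod M → ZMod M} (hf : MapsTo f s s)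
    (hcomm : ∀ x ∈ s, f' (g x) = g (f x))
    (hg : ∀ x ∈ s, ∀ y ∈ s, (g x).val < (g y).val ↔ (x - c).val < (y - c).val)
    {x y : ZMod N} (hx : x ∈ s) (hy : y ∈ s) :
    Linked f' (g x) (g y) ↔ Linked f x y := by
  rw [Linked, Linked, hcomm x hx, hcomm y hy,
    mem_openArc_iff_of_val_lt_iff hg hx (hf hx) hy,
    mem_openArc_iff_of_val_lt_iff hg hx (hf hx) (hf hy)]

end Linked

open Finset in
lemma strictMonoOn_card_range_sdiff (T : Finset ℕ) :
    StrictMonoOn (fun i => #(range i \ T)) (↑T)ᶜ := by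
  intro i hi j _ hij
  apply Finset.card_lt_card
  refine (ssubset_iff_of_subset (sdiff_subset_sdiff (range_subset_range.2 hij.le) le_rfl)).2
    ⟨i, ?_, ?_⟩ <;> simp_all

section Relabel

open Finset

variable {N M : ℕ} [NeZero N] {S : Finset (ZMod N)} {c : ZMod N} {φ : ZMod N → ZMod M}

lemma val_sub_notMem_image {x : ZMod N} (hx : x ∉ S) :
    (x - c).val ∈ (↑(S.image fun d => (d - c).val) : Set ℕ)ᶜ :=
  fun h => hx ((ZMod.val_sub_right_injective c).mem_finset_image.1 h)

variable (hM : N = M + #S)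
  (hφ : ∀ x, φ x = (((x - c).val - #{d ∈ S | (d - c).val < (x - c).val} : ℕ) : ZMod M))
include hM hφ

lemma val_relabel {x : ZMod N} (hx : x ∉ S) :
    (φ x).val = #(range (x - c).val \ S.image fun d => (d - c).val) := by
  have hpos := ZMod.val_sub_right_injective (N := N) c
  have hcount : (x - c).val - #{d ∈ S | (d - c).val < (x - c).val} =
      #(range (x - c).val \ S.image fun d => (d - c).val) := by
    rw [card_sdiff, card_range]
    congr 1
    rw [show (S.image fun d => (d - c).val) ∩ range (x - c).val =
        {i ∈ S.image fun d => (d - c).val | i < (x - c).val} by ext; simp [and_comm],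
      filter_image, Finset.card_image_of_injective _ hpos]
  rw [hφ, hcount, ZMod.val_natCast_of_lt]
  calc _ < #(range N \ S.image fun d => (d - c).val) :=
        strictMonoOn_card_range_sdiff _ (val_sub_notMem_image hx)
          (by simp [(ZMod.val_lt _).ne]) (ZMod.val_lt _)
    _ = M := by
        rw [card_sdiff_of_subset (by simp [subset_iff, ZMod.val_lt]), card_range,
          Finset.card_image_of_injective _ hpos]
        omega

lemma val_lt_val_iff_of_relabel :
    ∀ x ∈ (↑S : Set (ZMod N))ᶜ, ∀ y ∈ (↑S : Set (ZMod N))ᶜ,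
      (φ x).val < (φ y).val ↔ (x - c).val < (y - c).val := by
  intro x hx y hy
  rw [val_relabel hM hφ hx, val_relabel hM hφ hy]
  exact (strictMonoOn_card_range_sdiff _).lt_iff_lt (val_sub_notMem_image hx)
    (val_sub_notMem_image hy)

lemma injOn_relabel : InjOn φ (↑S : Set (ZMod N))ᶜ := by
  intro x hx y hy h
  have hval := congrArg ZMod.val h
  rw [val_relabel hM hφ hx, val_relabel hM hφ hy] at hval
  exact ZMod.val_sub_right_injective c ((strictMonoOn_card_range_sdiff _).injOn
    (val_sub_notMem_image hx) (val_sub_notMem_image hy) hval)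

lemma surjOn_relabel [NeZero M] : SurjOn φ (↑S : Set (ZMod N))ᶜ univ := by
  intro y _
  have hcard : #(Sᶜ.image φ) = Fintype.card (ZMod M) := by
    rw [card_image_of_injOn (by simpa using injOn_relabel hM hφ), card_compl, ZMod.card,
      ZMod.card]
    omega
  obtain ⟨x, hx, rfl⟩ := mem_image.1 (eq_univ_of_card _ hcard ▸ Finset.mem_univ y)
  exact ⟨x, by simpa using hx, rfl⟩

end Relabel

lemma Function.Involutive.mapsTo_compl {α : Type*} {f : α → α} {s : Set α} (hf : Involutive f)
    (hs : MapsTo f s s) : MapsTo f sᶜ sᶜ :=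
  fun y hy hfy => hy (hf y ▸ hs hfy)

lemma mapsTo_parallel_chords {N : ℕ} {f : ZMod N → ZMod N} (hf : Involutive f) {a b : ZMod N}
    (h1 : f a = b + 1) (h2 : f (a + 1) = b) :
    MapsTo f ({a, a + 1, b, b + 1} : Set (ZMod N)) {a, a + 1, b, b + 1} := by
  have hfb : f b = a + 1 := by rw [← h2, hf]
  have hfb1 : f (b + 1) = a := by rw [← h1, hf]
  rintro y (rfl | rfl | rfl | rfl) <;> simp [h1, h2, hfb, hfb1]

section Chords

variable {α β : Type*} {f : α → α} {s : Set α}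

lemma ncard_chords_eq_add [Finite α] (hs : MapsTo f s s) (P : α → Prop) :
    {d : Set α | ∃ y, d = {y, f y} ∧ P y}.ncard =
      {d : Set α | ∃ y ∈ s, d = {y, f y} ∧ P y}.ncard +
        {d : Set α | ∃ y ∈ sᶜ, d = {y, f y} ∧ P y}.ncard := by
  rw [← ncard_union_eq _ (toFinite _) (toFinite _)]
  · congr 1
    ext d
    constructor
    · rintro ⟨y, rfl, hy⟩
      by_cases hys : y ∈ s
      exacts [.inl ⟨y, hys, rfl, hy⟩, .inr ⟨y, hys, rfl, hy⟩]
    · rintro (⟨y, -, rfl, hy⟩ | ⟨y, -, rfl, hy⟩) <;> exact ⟨y, rfl, hy⟩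
  · rw [disjoint_left]
    rintro _ ⟨y, hy, rfl, -⟩ ⟨z, hz, hyz, -⟩
    have hz' : z ∈ ({y, f y} : Set α) := hyz ▸ mem_insert z _
    rcases hz' with rfl | rfl
    exacts [hz hy, hz (hs hy)]

lemma ncard_chords_eq_of_bijOn {f' : β → β} {φ : α → β} (hs : MapsTo f s s)
    (hinj : InjOn φ s)
    (hsurj : SurjOn φ s univ) (hcomm : ∀ x ∈ s, f' (φ x) = φ (f x)) {P : α → Prop}
    {P' : β → Prop} (hP : ∀ x ∈ s, P' (φ x) ↔ P x) :
    {d : Set β | ∃ y, d = {y, f' y} ∧ P' y}.ncard =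
      {d : Set α | ∃ y ∈ s, d = {y, f y} ∧ P y}.ncard := by
  have himage : {d : Set β | ∃ y, d = {y, f' y} ∧ P' y} =
      image φ '' {d : Set α | ∃ y ∈ s, d = {y, f y} ∧ P y} := by
    ext d
    constructor
    · rintro ⟨y', rfl, hy⟩
      obtain ⟨y, hys, rfl⟩ := hsurj (mem_univ y')
      exact ⟨_, ⟨y, hys, rfl, (hP y hys).1 hy⟩, by rw [image_pair, hcomm y hys]⟩
    · rintro ⟨_, ⟨y, hys, rfl, hy⟩, rfl⟩
      exact ⟨φ y, by rw [image_pair, hcomm y hys], (hP y hys).2 hy⟩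
  rw [himage, InjOn.ncard_image]
  rintro _ ⟨y, hy, rfl, -⟩ _ ⟨z, hz, rfl, -⟩ h
  exact (hinj.image_eq_image_iff (pair_subset hy (hs hy)) (pair_subset hz (hs hz))).1 h

end Chords

lemma even_ncard_linked_parallel_chords {N : ℕ} [NeZero N] {f : ZMod N → ZMod N}
    (hf : Involutive f) {a b x : ZMod N} (h1 : f a = b + 1) (h2 : f (a + 1) = b)
    (ha : a ≠ a + 1) (hab : a ≠ b)
    (hx : x ∉ ({a, a + 1, b, b + 1} : Set (ZMod N)))
    (hfx : f x ∉ ({a, a + 1, b, b + 1} : Set (ZMod N))) :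
    Even {d : Set (ZMod N) | ∃ y ∈ ({a, a + 1, b, b + 1} : Set (ZMod N)),
      d = {y, f y} ∧ Linked f x y}.ncard := by
  have hfb : f b = a + 1 := by rw [← h2, hf]
  have hfb1 : f (b + 1) = a := by rw [← h1, hf]
  have hpar := linked_add_one_iff_of_parallel h1 h2 hx hfx
  have hlinked : ∀ y ∈ ({a, a + 1, b, b + 1} : Set (ZMod N)),
      Linked f x y ↔ Linked f x a := by
    rintro y (rfl | rfl | rfl | rfl)
    · rfl
    · exact hpar
    · rw [← h2, linked_apply_iff hf, hpar]
    · rw [← h1, linked_apply_iff hf]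
  set C := {d : Set (ZMod N) | ∃ y ∈ ({a, a + 1, b, b + 1} : Set (ZMod N)),
    d = {y, f y} ∧ Linked f x y}
  by_cases hxa : Linked f x a
  · have hchords : C = {{a, b + 1}, {a + 1, b}} := by
      ext d
      constructor
      · rintro ⟨y, hy, rfl, -⟩
        rcases hy with rfl | rfl | rfl | rfl <;> simp [h1, h2, hfb, hfb1, pair_comm]
      · rintro (rfl | rfl)
        · exact ⟨a, by simp, by rw [h1], hxa⟩
        · exact ⟨a + 1, by simp, by rw [h2], hpar.2 hxa⟩
    rw [hchords, ncard_pair]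
    · exact even_two
    · intro h
      have : a ∈ ({a + 1, b} : Set (ZMod N)) := h ▸ mem_insert a _
      rcases this with h' | h'
      exacts [ha h', hab h']
  · have hchords : C = ∅ :=
      eq_empty_iff_forall_notMem.2 fun _ ⟨y, hy, _, hxy⟩ => hxa ((hlinked y hy).1 hxy)
    rw [hchords, ncard_empty]
    exact ⟨0, rfl⟩

theorem second_reidemeister_preserves_other_parities_general (n : ℕ) (hn : 3 ≤ n)
    (f : ZMod (2 * n) → ZMod (2 * n))
    (hinv : Function.Involutive f)
    (a b : ZMod (2 * n)) (h1 : f a = b + 1) (h2 : f (a + 1) = b)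
    (hdist : [a, a + 1, b, b + 1].Pairwise (· ≠ ·))
    (φ : ZMod (2 * n) → ZMod (2 * n - 4))
    (hφ : ∀ x, φ x = (((x - (a + 2)).val -
        Set.ncard {d : ZMod (2 * n) | d ∈ ({a, a + 1, b, b + 1} : Set (ZMod (2 * n))) ∧
          (d - (a + 2)).val < (x - (a + 2)).val} : ℕ) : ZMod (2 * n - 4)))
    (f' : ZMod (2 * n - 4) → ZMod (2 * n - 4))
    (hf' : ∀ x, x ∉ ({a, a + 1, b, b + 1} : Set (ZMod (2 * n))) → f' (φ x) = φ (f x)) :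
    ∀ x, x ∉ ({a, a + 1, b, b + 1} : Set (ZMod (2 * n))) →
      (GaussEven f' (φ x) ↔ GaussEven f x) := by
  intro x hx
  have : NeZero (2 * n) := ⟨by omega⟩
  have : NeZero (2 * n - 4) := ⟨by omega⟩
  set T : Finset (ZMod (2 * n)) := {a, a + 1, b, b + 1}
  have hTS : (T : Set (ZMod (2 * n))) = {a, a + 1, b, b + 1} := by simp [T]
  have hM : 2 * n = 2 * n - 4 + T.card := by
    rw [show T = [a, a + 1, b, b + 1].toFinset by simp [T], List.toFinset_card_of_nodup hdist]
    simp only [List.length_cons, List.length_nil]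
    omega
  have hφT : ∀ x, φ x = (((x - (a + 2)).val -
      (T.filter fun d => (d - (a + 2)).val < (x - (a + 2)).val).card : ℕ) :
        ZMod (2 * n - 4)) := by
    intro x
    rw [hφ, ← Set.ncard_coe_finset, Finset.coe_filter, ← hTS]
    rfl
  have hinj := injOn_relabel hM hφT
  have hsurj := surjOn_relabel hM hφT
  have hlt := val_lt_val_iff_of_relabel hM hφT
  rw [hTS] at hinj hsurj hlt
  have hfS := mapsTo_parallel_chords hinv h1 h2
  have hfSc := hinv.mapsTo_compl hfS
  have heven := even_ncard_linked_parallel_chords hinv h1 h2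
    (List.rel_of_pairwise_cons hdist (by simp)) (List.rel_of_pairwise_cons hdist (by simp))
    hx (hfSc hx)
  rw [GaussEven, GaussEven, linkedCount, linkedCount, ncard_chords_eq_add hfS,
    ncard_chords_eq_of_bijOn hfSc hinj hsurj hf' fun y hy =>
      linked_iff_of_val_lt_iff hfSc hf' hlt hx hy,
    Nat.even_add]
  exact (iff_true_left heven).symm

/-- Decreasing second Reidemeister move: deleting two parallel chords
`{a, b+1}`, `{a+1, b}` together with their four endpoints and relabelling the
remaining `2n - 4` points so as to preserve the cyclic order (the point `x` gets
the new label `(x - (a+2)).val` minus the number of deleted points preceding `x`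
in the order starting at `a+2`) does not change the Gaussian parity of any of the
remaining chords. -/
theorem second_reidemeister_preserves_other_parities (n : ℕ) (hn : 3 ≤ n)
    (f : ZMod (2 * n) → ZMod (2 * n))
    (hinv : Function.Involutive f) (hfpf : ∀ x, f x ≠ x)
    (a b : ZMod (2 * n)) (h1 : f a = b + 1) (h2 : f (a + 1) = b)
    (hdist : [a, a + 1, b, b + 1].Pairwise (· ≠ ·))
    (φ : ZMod (2 * n) → ZMod (2 * n - 4))
    (hφ : ∀ x, φ x = (((x - (a + 2)).val -
        Set.ncard {d : ZMod (2 * n) | d ∈ ({a, a + 1, b, b + 1} : Set (ZMod (2 * n))) ∧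
          (d - (a + 2)).val < (x - (a + 2)).val} : ℕ) : ZMod (2 * n - 4)))
    (f' : ZMod (2 * n - 4) → ZMod (2 * n - 4))
    (hf' : ∀ x, x ∉ ({a, a + 1, b, b + 1} : Set (ZMod (2 * n))) → f' (φ x) = φ (f x)) :
    ∀ x, x ∉ ({a, a + 1, b, b + 1} : Set (ZMod (2 * n))) →
      (GaussEven f' (φ x) ↔ GaussEven f x) :=
  second_reidemeister_preserves_other_parities_general n hn f hinv a b h1 h2 hdist φ hφ f' hf'
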